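/- Let H, G be real numbers and define θ^H, θ^G ∈ {0,1} by: (θ^H, θ^G) = (0,0) if d(F, P) = 0; (θ^H, θ^G) = (1,0) if 0 < d(F, P¹) ≤ d(F, P²); and (θ^H, θ^G) = (0,1) if 0 < d(F, P²) < d(F, P¹), where F = (−H, G). Then ‖(θ^H H, −θ^G G)‖₁ = d(F, P). -/
import Mathlib


noncomputable def dl1 (x : ℝ × ℝ) (A : Set (ℝ × ℝ)) : ℝ :=
  sInf ((fun y => |x.1 - y.1| + |x.2 - y.2|) '' A)

def P1 : Set (ℝ × ℝ) := {p | p.1 = 0}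
def P2 : Set (ℝ × ℝ) := {p | p.1 ≤ 0 ∧ p.2 ≤ 0}
def P : Set (ℝ × ℝ) := P1 ∪ P2

lemma dl1_P1 (x : ℝ × ℝ) : dl1 x P1 = |x.1| := by
  unfold dl1
  have hmem : |x.1| ∈ (fun y : ℝ × ℝ => |x.1 - y.1| + |x.2 - y.2|) '' P1 := by
    rw [Set.mem_image]
    exact ⟨(0, x.2), by simp [P1], by simp⟩
  apply le_antisymm
  · exact csInf_le ⟨0, by rintro b ⟨y, hy, rfl⟩; positivity⟩ hmem
  · apply le_csInf ⟨_, hmem⟩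
    rintro b ⟨y, hy, rfl⟩
    dsimp only
    have : y.1 = 0 := hy
    rw [this]
    have := abs_nonneg (x.2 - y.2)
    simp only [sub_zero]
    linarith

lemma dl1_P2 (x : ℝ × ℝ) : dl1 x P2 = max x.1 0 + max x.2 0 := by
  unfold dl1
  have key : ∀ t : ℝ, |t - min t 0| = max t 0 := by
    intro t
    rcases le_total t 0 with h | h <;>
      simp [min_eq_left, min_eq_right, max_eq_left, max_eq_right, h, abs_of_nonneg]
  have hmem : max x.1 0 + max x.2 0 ∈
      (fun y : ℝ × ℝ => |x.1 - y.1| + |x.2 - y.2|) '' P2 := by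
    rw [Set.mem_image]
    exact ⟨(min x.1 0, min x.2 0), ⟨min_le_right _ _, min_le_right _ _⟩,
      by simp [key]⟩
  have lb : ∀ b ∈ (fun y : ℝ × ℝ => |x.1 - y.1| + |x.2 - y.2|) '' P2,
      max x.1 0 + max x.2 0 ≤ b := by
    rintro b ⟨y, ⟨hy1, hy2⟩, rfl⟩
    dsimp only
    have h1 : max x.1 0 ≤ |x.1 - y.1| := by
      rcases le_total x.1 0 with h | h
      · simp [max_eq_right h, abs_nonneg]
      · rw [max_eq_left h]
        calc x.1 ≤ x.1 - y.1 := by linarith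
          _ ≤ |x.1 - y.1| := le_abs_self _
    have h2 : max x.2 0 ≤ |x.2 - y.2| := by
      rcases le_total x.2 0 with h | h
      · simp [max_eq_right h, abs_nonneg]
      · rw [max_eq_left h]
        calc x.2 ≤ x.2 - y.2 := by linarith
          _ ≤ |x.2 - y.2| := le_abs_self _
    linarith
  exact le_antisymm (csInf_le ⟨max x.1 0 + max x.2 0, lb⟩ hmem) (le_csInf ⟨_, hmem⟩ lb)

lemma dl1_P (x : ℝ × ℝ) : dl1 x P = min (dl1 x P1) (dl1 x P2) := by
  rw [dl1_P1, dl1_P2]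
  unfold dl1
  have lb : ∀ b ∈ (fun y : ℝ × ℝ => |x.1 - y.1| + |x.2 - y.2|) '' P,
      min (|x.1|) (max x.1 0 + max x.2 0) ≤ b := by
    rintro b ⟨y, hy, rfl⟩
    dsimp only
    rcases hy with hy | hy
    · refine le_trans (min_le_left _ _) ?_
      have : y.1 = 0 := hy
      rw [this]
      have := abs_nonneg (x.2 - y.2); simp only [sub_zero]; linarith
    · refine le_trans (min_le_right _ _) ?_
      obtain ⟨hy1, hy2⟩ := hy
      have h1 : max x.1 0 ≤ |x.1 - y.1| := by
        rcases le_total x.1 0 with h | h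
        · simp [max_eq_right h, abs_nonneg]
        · rw [max_eq_left h]
          calc x.1 ≤ x.1 - y.1 := by linarith
            _ ≤ |x.1 - y.1| := le_abs_self _
      have h2 : max x.2 0 ≤ |x.2 - y.2| := by
        rcases le_total x.2 0 with h | h
        · simp [max_eq_right h, abs_nonneg]
        · rw [max_eq_left h]
          calc x.2 ≤ x.2 - y.2 := by linarith
            _ ≤ |x.2 - y.2| := le_abs_self _
      linarith
  have key : ∀ t : ℝ, |t - min t 0| = max t 0 := by
    intro t
    rcases le_total t 0 with h | h <;>
      simp [min_eq_left, min_eq_right, max_eq_left, max_eq_right, h, abs_of_nonneg]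
  have bdd : BddBelow ((fun y : ℝ × ℝ => |x.1 - y.1| + |x.2 - y.2|) '' P) := ⟨_, lb⟩
  have hm1 : |x.1| ∈ (fun y : ℝ × ℝ => |x.1 - y.1| + |x.2 - y.2|) '' P := by
    rw [Set.mem_image]
    exact ⟨(0, x.2), Or.inl (by simp [P1]), by simp⟩
  have hm2 : max x.1 0 + max x.2 0 ∈ (fun y : ℝ × ℝ => |x.1 - y.1| + |x.2 - y.2|) '' P := by
    rw [Set.mem_image]
    exact ⟨(min x.1 0, min x.2 0), Or.inr ⟨min_le_right _ _, min_le_right _ _⟩, by simp [key]⟩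
  apply le_antisymm
  · exact le_min (csInf_le bdd hm1) (csInf_le bdd hm2)
  · exact le_csInf ⟨_, hm1⟩ lb

theorem theta_norm_eq_dist (H G θH θG : ℝ)
    (F : ℝ × ℝ) (hF : F = (-H, G))
    (hcase :
      (dl1 F P = 0 ∧ θH = 0 ∧ θG = 0) ∨
      (0 < dl1 F P1 ∧ dl1 F P1 ≤ dl1 F P2 ∧ θH = 1 ∧ θG = 0) ∨
      (0 < dl1 F P2 ∧ dl1 F P2 < dl1 F P1 ∧ θH = 0 ∧ θG = 1)) :
    |θH * H| + |-(θG * G)| = dl1 F P := by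
  subst hF
  rcases hcase with ⟨h0, hH, hG⟩ | ⟨h1, h2, hH, hG⟩ | ⟨h1, h2, hH, hG⟩
  · simp [hH, hG, h0]
  · rw [dl1_P, min_eq_left h2, dl1_P1]
    simp [hH, hG, abs_neg]
  · rw [dl1_P, min_eq_right h2.le]
    rw [dl1_P2] at h1
    rw [dl1_P1, dl1_P2] at h2
    simp only at h1 h2
    have hH' : -H < 0 := by
      by_contra h
      push_neg at h
      have : max (-H) 0 = -H := max_eq_left h
      rw [this, abs_of_nonneg h] at h2
      have := le_max_right G 0
      linarith
    have hG' : 0 < G := by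
      rw [max_eq_right hH'.le] at h1
      rcases le_total G 0 with h | h
      · rw [max_eq_right h] at h1; simp at h1
      · rcases h.lt_or_eq with h | h
        · exact h
        · rw [← h] at h1; simp at h1
    rw [dl1_P2]
    simp [hH, hG, abs_of_pos hG', max_eq_right hH'.le, max_eq_left hG'.le]
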